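/- arXiv:0707.0779 — 4 statements merged into one kernel-verified Lean document; each statement's English description precedes it below -/
import Mathlib

section
/- If f : gl(n,ℝ) → ℝ is differentiable and invariant under conjugation by GL(n,ℝ) (i.e. f(g x g⁻¹) = f(x) for all invertible g and all x), then its gradient with respect to the trace form commutes with the argument: [∇f(x), x] = 0 for all x. -/
/-!
Differentiating the identity `f (u x u⁻¹) = f x` at `u = 1` in the direction `a` gives
`df_x (a x - x a) = 0`, i.e. `df_x` kills every commutator `[x, a]`. Since the trace form is
invariant, `tr ([∇f(x), x] a) = tr (∇f(x) [x, a]) = df_x [x, a] = 0` for all `a`, and the trace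
form is nondegenerate.
-/

section ConjugationInvariant

variable {𝕜 R F : Type*} [NontriviallyNormedField 𝕜] [NormedRing R] [NormedAlgebra 𝕜 R]
  [HasSummableGeomSeries R] [NormedAddCommGroup F] [NormedSpace 𝕜 F]

open ContinuousLinearMap in
theorem hasFDerivAt_mul_mul_ringInverse_one (x : R) :
    HasFDerivAt (fun u : R => u * x * Ring.inverse u)
      (mulLeftRight 𝕜 R 1 x - mulLeftRight 𝕜 R x 1) 1 := by
  have hinv : HasFDerivAt (Ring.inverse : R → R) (-mulLeftRight 𝕜 R 1 1) 1 := by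
    simpa using hasFDerivAt_ringInverse (𝕜 := 𝕜) (1 : Rˣ)
  refine (((hasFDerivAt_id (𝕜 := 𝕜) (1 : R)).mul_const' x).fun_mul' hinv).congr_fderiv ?_
  ext a
  simp [sub_eq_neg_add]

theorem fderiv_apply_commutator_eq_zero_of_conj_invariant {f : R → F}
    (hinv : ∀ (g : Rˣ) (x : R), f (g * x * ↑g⁻¹) = f x) {x : R} (hf : DifferentiableAt 𝕜 f x)
    (a : R) : fderiv 𝕜 f x (x * a - a * x) = 0 := by
  have hconst : (fun u : R => f (u * x * Ring.inverse u)) =ᶠ[nhds 1] fun _ => f x := by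
    filter_upwards [Units.isOpen.mem_nhds isUnit_one] with u ⟨g, hg⟩
    rw [← hg, Ring.inverse_unit, hinv]
  have hf' : HasFDerivAt f (fderiv 𝕜 f x) ((1 : R) * x * Ring.inverse 1) := by
    simpa using hf.hasFDerivAt
  have hcomp := hf'.comp (1 : R) (hasFDerivAt_mul_mul_ringInverse_one x)
  have hcomp_eq_zero := hcomp.unique ((hasFDerivAt_const (f x) 1).congr_of_eventuallyEq hconst)
  rw [← neg_sub, map_neg, neg_eq_zero]
  simpa using DFunLike.congr_fun hcomp_eq_zero a

end ConjugationInvariant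

theorem Matrix.trace_commutator_mul {n R : Type*} [Fintype n] [CommRing R] (A B C : Matrix n n R) :
    trace ((A * B - B * A) * C) = trace (A * (B * C - C * B)) := by
  simp only [Matrix.sub_mul, Matrix.mul_sub, trace_sub, Matrix.mul_assoc]
  rw [trace_mul_comm B, Matrix.mul_assoc]

attribute [local instance] Matrix.frobeniusNormedAddCommGroup Matrix.frobeniusNormedSpace
attribute [local instance] Matrix.frobeniusNormedRing Matrix.frobeniusNormedAlgebra

theorem gradient_commutes_of_invariant (n : ℕ)
    (f : Matrix (Fin n) (Fin n) ℝ → ℝ) (hf : Differentiable ℝ f)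
    (hinv : ∀ g : GL (Fin n) ℝ, ∀ x : Matrix (Fin n) (Fin n) ℝ,
      f ((g : Matrix (Fin n) (Fin n) ℝ) * x * ((g⁻¹ : GL (Fin n) ℝ) : Matrix (Fin n) (Fin n) ℝ)) = f x)
    (grad : Matrix (Fin n) (Fin n) ℝ → Matrix (Fin n) (Fin n) ℝ)
    (hgrad : ∀ x y : Matrix (Fin n) (Fin n) ℝ,
      Matrix.trace (grad x * y) = deriv (fun t : ℝ => f (x + t • y)) 0) :
    ∀ x : Matrix (Fin n) (Fin n) ℝ, grad x * x - x * grad x = 0 := by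
  intro x
  have hgrad_eq_fderiv (y : Matrix (Fin n) (Fin n) ℝ) : (grad x * y).trace = fderiv ℝ f x y :=
    (hgrad x y).trans (hf x).lineDeriv_eq_fderiv
  refine Matrix.ext_iff_trace_mul_right.mpr fun y => ?_
  rw [Matrix.trace_commutator_mul, hgrad_eq_fderiv, Matrix.zero_mul, Matrix.trace_zero]
  exact fderiv_apply_commutator_eq_zero_of_conj_invariant hinv (hf x) y
end

section
/- Let P be the subgroup of GL(n,ℝ) of invertible matrices whose last row is (0,…,0,1). For every y ∈ P and every x ∈ gl(n,ℝ), one has D(y x y⁻¹) = (det y)⁻¹ · D(x), where D(x) is the determinant of the matrix with rows e_n, e_n x, …, e_n x^{n-1}. In particular, the zero set of D is invariant under conjugation by P. -/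
/-! Since `e_n y = e_n`, each row `e_n (y x y⁻¹)^k = e_n y x^k y⁻¹` equals `e_n x^k y⁻¹`, so the
matrix defining `D` is multiplied on the right by `y⁻¹`. -/

noncomputable def Dmat (n : ℕ) (x : Matrix (Fin (n+1)) (Fin (n+1)) ℝ) : ℝ :=
  (Matrix.of fun k j : Fin (n+1) =>
    Matrix.vecMul (Pi.single (Fin.last n) 1) (x ^ (k : ℕ)) j).det

open Matrix

theorem Matrix.of_vecMul_pow_units_conj {ι m R : Type*} [Fintype m] [DecidableEq m] [CommRing R]
    (f : ι → ℕ) {v : m → R} (y : GL m R) (hv : v ᵥ* (y : Matrix m m R) = v)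
    (x : Matrix m m R) :
    of (fun i => v ᵥ* (((y : Matrix m m R) * x * ((y⁻¹ : GL m R) : Matrix m m R)) ^ f i)) =
      of (fun i => v ᵥ* x ^ f i) * ((y⁻¹ : GL m R) : Matrix m m R) := by
  ext i j
  rw [of_apply, Units.conj_pow, ← vecMul_vecMul, ← vecMul_vecMul, hv]
  rfl

theorem Dmat_units_conj {n : ℕ} (y : GL (Fin (n+1)) ℝ)
    (hy : (y : Matrix (Fin (n+1)) (Fin (n+1)) ℝ) (Fin.last n) = Pi.single (Fin.last n) 1)
    (x : Matrix (Fin (n+1)) (Fin (n+1)) ℝ) :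
    Dmat n ((y : Matrix (Fin (n+1)) (Fin (n+1)) ℝ) * x *
        ((y⁻¹ : GL (Fin (n+1)) ℝ) : Matrix (Fin (n+1)) (Fin (n+1)) ℝ)) =
      (y : Matrix (Fin (n+1)) (Fin (n+1)) ℝ).det⁻¹ * Dmat n x := by
  have hv : Pi.single (Fin.last n) 1 ᵥ* (y : Matrix (Fin (n+1)) (Fin (n+1)) ℝ) =
      Pi.single (Fin.last n) 1 := by
    rw [single_one_vecMul]
    exact hy
  unfold Dmat
  rw [of_vecMul_pow_units_conj (fun k : Fin (n+1) => (k : ℕ)) y hv x, det_mul, coe_units_inv,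
    det_nonsing_inv, Ring.inverse_eq_inv', mul_comm]

theorem Dmat_conj_P (n : ℕ) (y : GL (Fin (n+1)) ℝ)
    (hy : (y : Matrix (Fin (n+1)) (Fin (n+1)) ℝ) (Fin.last n) = Pi.single (Fin.last n) 1)
    (x : Matrix (Fin (n+1)) (Fin (n+1)) ℝ) :
    Dmat n ((y : Matrix (Fin (n+1)) (Fin (n+1)) ℝ) * x *
        ((y⁻¹ : GL (Fin (n+1)) ℝ) : Matrix (Fin (n+1)) (Fin (n+1)) ℝ)) =
      ((y : Matrix (Fin (n+1)) (Fin (n+1)) ℝ).det)⁻¹ * Dmat n x ∧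
    (Dmat n x = 0 →
      Dmat n ((y : Matrix (Fin (n+1)) (Fin (n+1)) ℝ) * x *
        ((y⁻¹ : GL (Fin (n+1)) ℝ) : Matrix (Fin (n+1)) (Fin (n+1)) ℝ)) = 0) := by
  have hconj := Dmat_units_conj y hy x
  exact ⟨hconj, fun hx => by rw [hconj, hx, mul_zero]⟩
end

section
/- If x is an n×n real matrix with D(x) ≠ 0, then the centralizer of x in gl(n,ℝ) equals the span of I, x, x², …, x^{n-1}, i.e. the algebra ℝ[x] of polynomials in x, which has dimension n. -/
/-!
Write `e = e_n` and let `K` be the Krylov matrix whose rows are `e x^k`, so that `D(x) = det K`.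
A row vector `c` combines the rows of `K` into `c K = e (∑ c_k x^k)`, so `det K ≠ 0` makes
`I, x, …, x^{n-1}` linearly independent. If `y` commutes with `x`, choose the polynomial
`p = ∑ c_k x^k` with `c K = e y`; then `p` also commutes with `x`, and the rows of `K y` and `K p`
are `(e y) x^k = (e p) x^k`, so `K y = K p` and `y = p`.
-/

open Matrix Submodule Set

theorem span_range_pow_le_centralizer {R A ι : Type*} [CommSemiring R] [Semiring A] [Algebra R A]
    (e : ι → ℕ) (x : A) :
    span R (range fun i => x ^ e i) ≤ Subalgebra.toSubmodule (Subalgebra.centralizer R {x}) :=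
  have hx : x ∈ Subalgebra.centralizer R {x} :=
    Subalgebra.mem_centralizer_iff R |>.mpr fun _ hg => by rw [mem_singleton_iff.mp hg]
  span_le.mpr <| range_subset_iff.mpr fun i => pow_mem hx (e i)

namespace Matrix

variable {R : Type*} [CommRing R] {m : Type*} [Fintype m] [DecidableEq m]

def krylov (k : ℕ) (v : m → R) (x : Matrix m m R) : Matrix (Fin k) m R :=
  of fun i => v ᵥ* x ^ (i : ℕ)

theorem vecMul_krylov {k : ℕ} (c : Fin k → R) (v : m → R) (x : Matrix m m R) :
    c ᵥ* krylov k v x = v ᵥ* ∑ i, c i • x ^ (i : ℕ) := by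
  simp only [vecMul_sum, vecMul_smul, vecMul_eq_sum (v := c)]
  rfl

theorem krylov_mul_eq_krylov_mul {k : ℕ} {v : m → R} {x y z : Matrix m m R}
    (hy : Commute x y) (hz : Commute x z) (hyz : v ᵥ* y = v ᵥ* z) :
    krylov k v x * y = krylov k v x * z := by
  funext i
  calc (krylov k v x * y) i = (v ᵥ* x ^ (i : ℕ)) ᵥ* y := rfl
    _ = (v ᵥ* y) ᵥ* x ^ (i : ℕ) := by rw [vecMul_vecMul, vecMul_vecMul, (hy.pow_left _).eq]
    _ = (v ᵥ* x ^ (i : ℕ)) ᵥ* z := by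
      rw [hyz, vecMul_vecMul, vecMul_vecMul, (hz.pow_left _).eq]
    _ = (krylov k v x * z) i := rfl

variable {k : ℕ} {v : Fin k → R} {x : Matrix (Fin k) (Fin k) R}

theorem linearIndependent_pow_of_isUnit_det_krylov (hK : IsUnit (krylov k v x).det) :
    LinearIndependent R fun i : Fin k => x ^ (i : ℕ) := by
  have hK_unit := (isUnit_iff_isUnit_det _).mpr hK
  refine Fintype.linearIndependent_iff.mpr fun c hc => ?_
  have hcK : c ᵥ* krylov k v x = 0 ᵥ* krylov k v x := by
    rw [vecMul_krylov, hc, vecMul_zero, zero_vecMul]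
  exact congrFun (vecMul_injective_of_isUnit hK_unit hcK)

theorem mem_span_pow_of_isUnit_det_krylov (hK : IsUnit (krylov k v x).det)
    {y : Matrix (Fin k) (Fin k) R} (hxy : Commute x y) :
    y ∈ span R (range fun i : Fin k => x ^ (i : ℕ)) := by
  have hK_unit := (isUnit_iff_isUnit_det _).mpr hK
  set c := (v ᵥ* y) ᵥ* (krylov k v x)⁻¹
  set p := ∑ i, c i • x ^ (i : ℕ)
  have hp : Commute x p :=
    Commute.sum_right _ _ _ fun i _ => (Commute.self_pow x i).smul_right (c i)
  have hvp : v ᵥ* y = v ᵥ* p := by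
    rw [← vecMul_krylov, vecMul_vecMul, nonsing_inv_mul _ hK, vecMul_one]
  have hyp : y = p := hK_unit.mul_left_cancel (krylov_mul_eq_krylov_mul hxy hp hvp)
  rw [hyp]
  exact sum_mem fun i _ => smul_mem _ _ (subset_span ⟨i, rfl⟩)

end Matrix

theorem centralizer_eq_polynomials (n : ℕ) (x : Matrix (Fin (n+1)) (Fin (n+1)) ℝ)
    (h : Dmat n x ≠ 0) :
    (∀ y : Matrix (Fin (n+1)) (Fin (n+1)) ℝ, x * y = y * x ↔
      y ∈ Submodule.span ℝ (Set.range fun k : Fin (n+1) => x ^ (k : ℕ))) ∧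
    Module.finrank ℝ (Submodule.span ℝ (Set.range fun k : Fin (n+1) => x ^ (k : ℕ))) = n + 1 := by
  have hK : IsUnit (krylov (n + 1) (Pi.single (Fin.last n) 1) x).det := isUnit_iff_ne_zero.mpr h
  refine ⟨fun y => ⟨fun hxy => mem_span_pow_of_isUnit_det_krylov hK hxy, fun hy => ?_⟩, ?_⟩
  · exact Subalgebra.mem_centralizer_iff ℝ |>.mp (span_range_pow_le_centralizer _ x hy) x rfl
  · simpa using finrank_span_eq_card (linearIndependent_pow_of_isUnit_det_krylov hK)
end

section
/- Let φ : gl(n,ℝ) → ℝ be C¹ and suppose (L_{ij}φ)(x) = 0 for all x whenever 1 ≤ i ≤ n-1 and 1 ≤ j ≤ n (local invariance under the parabolic subalgebra p). Then for every x with D(x) ≠ 0 and every 1 ≤ j ≤ n, (L_{nj}φ)(x) = 0; i.e. φ is locally gl(n,ℝ)-invariant on the open set Ω = {D ≠ 0}. -/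
attribute [local instance] Matrix.frobeniusNormedAddCommGroup Matrix.frobeniusNormedSpace

/-- Derivative of `φ` along the adjoint vector field `x ↦ [E i j, x]`. -/
noncomputable def Lop (n : ℕ) (i j : Fin (n+1))
    (φ : Matrix (Fin (n+1)) (Fin (n+1)) ℝ → ℝ)
    (x : Matrix (Fin (n+1)) (Fin (n+1)) ℝ) : ℝ :=
  deriv (fun t : ℝ => φ (x + t • (Matrix.single i j (1:ℝ) * x
    - x * Matrix.single i j (1:ℝ)))) 0

/-!
For every `a` commuting with `x`, the vector field `[a, ·]` vanishes at `x`, and expanding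
`a = ∑ a i l • E i l` gives `∑ i l, a i l * (L i l φ)(x) = 0`. When `φ` is invariant under the
rows `i ≠ n`, only the last row survives: `∑ l, a n l * (L n l φ)(x) = 0`. Taking `a = x ^ k` for
`k = 0, …, n` gives a square linear system for the unknowns `(L n l φ)(x)` whose matrix has
determinant `D(x)`, so they vanish where `D(x) ≠ 0`.
-/

open Matrix

theorem Matrix.commutator_eq_sum_single {m R : Type*} [Fintype m] [DecidableEq m] [CommRing R]
    (a x : Matrix m m R) :
    a * x - x * a = ∑ i, ∑ l, a i l • (single i l (1 : R) * x - x * single i l (1 : R)) := by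
  conv_lhs => rw [matrix_eq_sum_single a]
  simp only [Finset.sum_mul, Finset.mul_sum, ← Finset.sum_sub_distrib]
  refine Finset.sum_congr rfl fun i _ => Finset.sum_congr rfl fun l _ => ?_
  rw [smul_sub, ← smul_mul_assoc, ← mul_smul_comm, smul_single, smul_eq_mul, mul_one]

section Lop

variable {n : ℕ} {φ : Matrix (Fin (n+1)) (Fin (n+1)) ℝ → ℝ} {x : Matrix (Fin (n+1)) (Fin (n+1)) ℝ}

theorem Lop_eq_fderiv (i j : Fin (n+1)) (hφ : DifferentiableAt ℝ φ x) :
    Lop n i j φ x = fderiv ℝ φ x (single i j (1:ℝ) * x - x * single i j (1:ℝ)) := by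
  set v := single i j (1:ℝ) * x - x * single i j (1:ℝ)
  have hline : HasDerivAt (fun t : ℝ => x + t • v) v 0 :=
    (((hasDerivAt_id (0:ℝ)).smul_const v).const_add x).congr_deriv (one_smul ℝ v)
  have hφ' : HasFDerivAt φ (fderiv ℝ φ x) (x + (0:ℝ) • v) := by
    simpa using hφ.hasFDerivAt
  exact (hφ'.comp_hasDerivAt 0 hline).deriv

theorem sum_mul_Lop_eq_zero_of_commute (hφ : DifferentiableAt ℝ φ x)
    {a : Matrix (Fin (n+1)) (Fin (n+1)) ℝ} (ha : Commute a x) :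
    ∑ i, ∑ l, a i l * Lop n i l φ x = 0 := by
  have hvanish : fderiv ℝ φ x (a * x - x * a) = 0 := by
    rw [ha.eq, sub_self, map_zero]
  rw [commutator_eq_sum_single] at hvanish
  simpa only [map_sum, map_smul, smul_eq_mul, Lop_eq_fderiv _ _ hφ] using hvanish

theorem sum_mul_Lop_last_eq_zero_of_commute (hφ : DifferentiableAt ℝ φ x)
    (hP : ∀ i j : Fin (n+1), i ≠ Fin.last n → Lop n i j φ x = 0)
    {a : Matrix (Fin (n+1)) (Fin (n+1)) ℝ} (ha : Commute a x) :
    ∑ l, a (Fin.last n) l * Lop n (Fin.last n) l φ x = 0 := by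
  have hrows : ∀ i ≠ Fin.last n, ∑ l, a i l * Lop n i l φ x = 0 := fun i hi =>
    Finset.sum_eq_zero fun l _ => by rw [hP i l hi, mul_zero]
  rw [← sum_mul_Lop_eq_zero_of_commute hφ ha,
    Finset.sum_eq_single (Fin.last n) (fun i _ hi => hrows i hi) (by simp)]

end Lop

theorem P_invariant_implies_invariant_on_Omega (n : ℕ)
    (φ : Matrix (Fin (n+1)) (Fin (n+1)) ℝ → ℝ) (hφ : ContDiff ℝ 1 φ)
    (hP : ∀ i j : Fin (n+1), i ≠ Fin.last n →
      ∀ x : Matrix (Fin (n+1)) (Fin (n+1)) ℝ, Lop n i j φ x = 0) :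
    ∀ x : Matrix (Fin (n+1)) (Fin (n+1)) ℝ, Dmat n x ≠ 0 →
      ∀ j : Fin (n+1), Lop n (Fin.last n) j φ x = 0 := by
  intro x hD j
  have hφx : DifferentiableAt ℝ φ x := hφ.differentiable one_ne_zero x
  have hsystem : (of fun k l : Fin (n+1) => (Pi.single (Fin.last n) 1 ᵥ* x ^ (k : ℕ)) l) *ᵥ
      (fun l => Lop n (Fin.last n) l φ x) = 0 := by
    funext k
    simpa [mulVec, dotProduct] using sum_mul_Lop_last_eq_zero_of_commute hφx
      (fun i l hi => hP i l hi x) ((Commute.refl x).pow_left k)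
  exact congrFun (eq_zero_of_mulVec_eq_zero hD hsystem) j
end
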